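/- arXiv:2310.04543 — 7 statements merged into one kernel-verified Lean document; each statement's English description precedes it below -/
import Mathlib

section
/- For every positive integer n and real number m such that cos(3^p · m) ≠ 0 and cos(3^(p+1) · m) ≠ 0 for all relevant indices, the finite sum ∑_{p=0}^{n-1} 3^(-p) · sin³(3^p m) · sec(3^(p+1) m) equals (3/8)·(3^(-n)·tan(3^n m) − tan(m)). -/
open Real Finset

lemma levett_key (t : ℝ) (h1 : Real.cos t ≠ 0) (h3 : Real.cos (3*t) ≠ 0) :
    (Real.sin t)^3 * (Real.cos (3*t))⁻¹ = (1/8) * Real.tan (3*t) - (3/8) * Real.tan t := by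
  rw [Real.tan_eq_sin_div_cos, Real.tan_eq_sin_div_cos]
  field_simp
  rw [Real.sin_three_mul, Real.cos_three_mul]
  linear_combination (12 * Real.sin t * Real.cos t) *
    (Real.sin_sq_add_cos_sq t)

theorem levett_secant_sine_series (n : ℕ) (hn : 0 < n) (m : ℝ)
    (hcos : ∀ p ≤ n, Real.cos ((3:ℝ)^p * m) ≠ 0) :
    ∑ p ∈ Finset.range n,
        ((3:ℝ)^p)⁻¹ * (Real.sin ((3:ℝ)^p * m))^3 * (Real.cos ((3:ℝ)^(p+1) * m))⁻¹
      = (3/8) * (((3:ℝ)^n)⁻¹ * Real.tan ((3:ℝ)^n * m) - Real.tan m) := by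
  have hterm : ∀ p ∈ Finset.range n,
      ((3:ℝ)^p)⁻¹ * (Real.sin ((3:ℝ)^p * m))^3 * (Real.cos ((3:ℝ)^(p+1) * m))⁻¹
        = (3/8) * (((3:ℝ)^(p+1))⁻¹ * Real.tan ((3:ℝ)^(p+1) * m)
            - ((3:ℝ)^p)⁻¹ * Real.tan ((3:ℝ)^p * m)) := by
    intro p hp
    rw [Finset.mem_range] at hp
    have h1 : Real.cos ((3:ℝ)^p * m) ≠ 0 := hcos p (le_of_lt hp)
    have h3 : Real.cos ((3:ℝ)^(p+1) * m) ≠ 0 := hcos (p+1) hp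
    have he : (3:ℝ)^(p+1) * m = 3 * ((3:ℝ)^p * m) := by ring
    rw [he] at h3 ⊢
    rw [mul_assoc, levett_key _ h1 h3, pow_succ]
    have : (3:ℝ)^p ≠ 0 := by positivity
    field_simp
  rw [Finset.sum_congr rfl hterm, ← Finset.mul_sum,
    Finset.sum_range_sub (fun p => ((3:ℝ)^p)⁻¹ * Real.tan ((3:ℝ)^p * m))]
  simp
end

section
/- For every positive integer n and real number m such that sin(3^p · m) ≠ 0 for 0 ≤ p ≤ n, the finite sum ∑_{p=0}^{n-1} cos(2·3^p m) · csc(3^(p+1) m) equals (1/2)·(csc(m) − csc(3^n m)). -/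
open Real Finset

theorem levett_cosecant_cosine_series (n : ℕ) (hn : 0 < n) (m : ℝ)
    (hsin : ∀ p ≤ n, Real.sin ((3:ℝ)^p * m) ≠ 0) :
    ∑ p ∈ Finset.range n,
        Real.cos (2 * (3:ℝ)^p * m) * (Real.sin ((3:ℝ)^(p+1) * m))⁻¹
      = (1/2) * ((Real.sin m)⁻¹ - (Real.sin ((3:ℝ)^n * m))⁻¹) := by
  have hsum : ∑ p ∈ Finset.range n,
      Real.cos (2 * (3:ℝ)^p * m) * (Real.sin ((3:ℝ)^(p+1) * m))⁻¹
      = ∑ p ∈ Finset.range n,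
        (1/2) * ((Real.sin ((3:ℝ)^p * m))⁻¹ - (Real.sin ((3:ℝ)^(p+1) * m))⁻¹) := by
    apply Finset.sum_congr rfl
    intro p hp
    rw [Finset.mem_range] at hp
    have h1 := hsin p hp.le
    have h2 := hsin (p+1) hp
    set θ := (3:ℝ)^p * m with hθ
    have h3 : (3:ℝ)^(p+1) * m = 3 * θ := by rw [hθ]; ring
    rw [h3] at h2 ⊢
    have hs3 := Real.sin_three_mul θ
    have hc2 := Real.cos_two_mul θ
    have hsc := Real.sin_sq_add_cos_sq θ
    have h2θ : 2 * (3:ℝ)^p * m = 2 * θ := by rw [hθ]; ring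
    rw [h2θ]
    have key : Real.sin (3*θ) - Real.sin θ = 2 * Real.cos (2*θ) * Real.sin θ := by
      rw [hs3, hc2]; linear_combination (-4*Real.sin θ) * hsc
    generalize Real.sin (3*θ) = s at h2 key ⊢
    field_simp
    linear_combination (-1) * key
  rw [hsum, ← Finset.mul_sum, Finset.sum_range_sub' (fun p => (Real.sin ((3:ℝ)^p * m))⁻¹)]
  norm_num
end

section
/- For nonzero real numbers m, r of the same sign, the infinite product ∏_{p=0}^∞ [ ((1 + 2cosh(2·3^p m))·(−1 + 2cosh(2·3^p r)) / ((−1 + 2cosh(2·3^p m))·(1 + 2cosh(2·3^p r))))^{3^(−p)} · (tanh(3^p r)/tanh(3^p m))^{2·3^(−p)} ] converges to (tanh r / tanh m)³. -/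
open Real Finset Filter

lemma tanh_three_mul' (x : ℝ) :
    Real.tanh (3 * x) = Real.tanh x * (1 + 2 * Real.cosh (2 * x)) / (-1 + 2 * Real.cosh (2 * x)) := by
  have hc : Real.cosh x ≠ 0 := (Real.cosh_pos x).ne'
  have hd : -1 + 2 * Real.cosh (2 * x) ≠ 0 := by nlinarith [Real.one_le_cosh (2*x)]
  have e1 : Real.sinh (3 * x) = Real.sinh x * (1 + 2 * Real.cosh (2 * x)) := by
    rw [Real.sinh_three_mul, Real.cosh_two_mul]
    linear_combination (-2 * Real.sinh x) * Real.cosh_sq x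
  have e2 : Real.cosh (3 * x) = Real.cosh x * (-1 + 2 * Real.cosh (2 * x)) := by
    rw [Real.cosh_three_mul, Real.cosh_two_mul]
    linear_combination (2 * Real.cosh x) * Real.cosh_sq x
  rw [Real.tanh_eq_sinh_div_cosh, Real.tanh_eq_sinh_div_cosh, e1, e2]
  field_simp

lemma tendsto_tanh_atTop' : Filter.Tendsto Real.tanh Filter.atTop (nhds 1) := by
  have key : ∀ x : ℝ, Real.tanh x = (1 - Real.exp (-2 * x)) / (1 + Real.exp (-2 * x)) := by
    intro x
    have h2 : Real.exp x * Real.exp (-x) = 1 := by rw [← Real.exp_add]; simp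
    have hp : (0:ℝ) < Real.exp (-x) := Real.exp_pos _
    have hd : (0:ℝ) < 1 + Real.exp (-2 * x) := by positivity
    rw [Real.tanh_eq_sinh_div_cosh, Real.sinh_eq, Real.cosh_eq,
      show (-2:ℝ) * x = -x + -x by ring, Real.exp_add]
    rw [div_div_div_cancel_right₀]
    · field_simp
      linear_combination (2 * Real.exp (-x)) * h2
    · norm_num
  have hb : Tendsto (fun x : ℝ => -2 * x) atTop atBot := by
    have h2 : Tendsto (fun x : ℝ => (2:ℝ) * x) atTop atTop :=
      Tendsto.const_mul_atTop two_pos tendsto_id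
    exact (tendsto_neg_atTop_atBot.comp h2).congr (fun x => by show -(2*x) = -2*x; ring)
  have h1 : Tendsto (fun x : ℝ => Real.exp (-2 * x)) atTop (nhds 0) :=
    Real.tendsto_exp_atBot.comp hb
  have hone : Tendsto (fun _ : ℝ => (1:ℝ)) atTop (nhds 1) := tendsto_const_nhds
  have h3 := (hone.sub h1).div (hone.add h1) (by norm_num : (1:ℝ) + 0 ≠ 0)
  rw [show ((1:ℝ) - 0) / (1 + 0) = 1 by norm_num] at h3
  exact h3.congr (fun x => (key x).symm)

lemma tanh_pos' {x : ℝ} (hx : 0 < x) : 0 < Real.tanh x := by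
  rw [Real.tanh_eq_sinh_div_cosh]
  exact div_pos (Real.sinh_pos_iff.2 hx) (Real.cosh_pos x)

lemma levett_main_pos (m r : ℝ) (hm : 0 < m) (hr : 0 < r) :
    Filter.Tendsto (fun n : ℕ =>
        ∏ p ∈ Finset.range n,
          (((1 + 2 * Real.cosh (2 * (3:ℝ)^p * m)) * (-1 + 2 * Real.cosh (2 * (3:ℝ)^p * r))
              / ((-1 + 2 * Real.cosh (2 * (3:ℝ)^p * m)) * (1 + 2 * Real.cosh (2 * (3:ℝ)^p * r))))
                ^ ((((3:ℝ)^p)⁻¹ : ℝ))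
            * (Real.tanh ((3:ℝ)^p * r) / Real.tanh ((3:ℝ)^p * m)) ^ ((2 * ((3:ℝ)^p)⁻¹ : ℝ))))
      Filter.atTop (nhds ((Real.tanh r / Real.tanh m)^3)) := by
  set t : ℕ → ℝ := fun p => Real.tanh ((3:ℝ)^p * m) with ht_def
  set u : ℕ → ℝ := fun p => Real.tanh ((3:ℝ)^p * r) with hu_def
  have h3p : ∀ p : ℕ, (0:ℝ) < (3:ℝ)^p := fun p => by positivity
  have htp : ∀ p, 0 < t p := fun p => tanh_pos' (by positivity)
  have hup : ∀ p, 0 < u p := fun p => tanh_pos' (by positivity)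
  set g : ℕ → ℝ := fun p => u p / t p with hg_def
  have hgp : ∀ p, 0 < g p := fun p => div_pos (hup p) (htp p)
  set f : ℕ → ℝ := fun p => ((3:ℝ)^p)⁻¹ * Real.log (g p) with hf_def
  -- tanh triple identities
  have hdm : ∀ p : ℕ, (0:ℝ) < -1 + 2 * Real.cosh (2 * (3:ℝ)^p * m) := by
    intro p; nlinarith [Real.one_le_cosh (2 * (3:ℝ)^p * m)]
  have hdr : ∀ p : ℕ, (0:ℝ) < -1 + 2 * Real.cosh (2 * (3:ℝ)^p * r) := by
    intro p; nlinarith [Real.one_le_cosh (2 * (3:ℝ)^p * r)]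
  have htm : ∀ p : ℕ, t (p+1) * (-1 + 2 * Real.cosh (2 * (3:ℝ)^p * m))
      = t p * (1 + 2 * Real.cosh (2 * (3:ℝ)^p * m)) := by
    intro p
    have := tanh_three_mul' ((3:ℝ)^p * m)
    rw [show (3:ℝ) * ((3:ℝ)^p * m) = (3:ℝ)^(p+1) * m by rw [pow_succ]; ring,
      show (2:ℝ) * ((3:ℝ)^p * m) = 2 * (3:ℝ)^p * m by ring] at this
    rw [ht_def]; simp only []
    rw [this, div_mul_eq_mul_div]
    exact mul_div_cancel_right₀ _ (hdm p).ne'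
  have hum : ∀ p : ℕ, u (p+1) * (-1 + 2 * Real.cosh (2 * (3:ℝ)^p * r))
      = u p * (1 + 2 * Real.cosh (2 * (3:ℝ)^p * r)) := by
    intro p
    have := tanh_three_mul' ((3:ℝ)^p * r)
    rw [show (3:ℝ) * ((3:ℝ)^p * r) = (3:ℝ)^(p+1) * r by rw [pow_succ]; ring,
      show (2:ℝ) * ((3:ℝ)^p * r) = 2 * (3:ℝ)^p * r by ring] at this
    rw [hu_def]; simp only []
    rw [this, div_mul_eq_mul_div]
    exact mul_div_cancel_right₀ _ (hdr p).ne'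
  -- the ratio of cosh expressions equals g p / g (p+1)
  have hB : ∀ p : ℕ,
      (1 + 2 * Real.cosh (2 * (3:ℝ)^p * m)) * (-1 + 2 * Real.cosh (2 * (3:ℝ)^p * r))
        / ((-1 + 2 * Real.cosh (2 * (3:ℝ)^p * m)) * (1 + 2 * Real.cosh (2 * (3:ℝ)^p * r)))
      = g p / g (p+1) := by
    intro p
    have h1 := htm p
    have h2 := hum p
    have hnumr : (0:ℝ) < 1 + 2 * Real.cosh (2 * (3:ℝ)^p * r) := by
      nlinarith [Real.one_le_cosh (2 * (3:ℝ)^p * r)]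
    have e1 : (1 + 2 * Real.cosh (2 * (3:ℝ)^p * m)) / (-1 + 2 * Real.cosh (2 * (3:ℝ)^p * m))
        = t (p+1) / t p := by
      rw [div_eq_div_iff (hdm p).ne' (htp p).ne']
      linear_combination -h1
    have e2 : (-1 + 2 * Real.cosh (2 * (3:ℝ)^p * r)) / (1 + 2 * Real.cosh (2 * (3:ℝ)^p * r))
        = u p / u (p+1) := by
      rw [div_eq_div_iff hnumr.ne' (hup (p+1)).ne']
      linear_combination h2
    rw [← div_mul_div_comm, e1, e2, hg_def]
    simp only []
    field_simp
  -- each factor equals exp (3 f p - 3 f (p+1))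
  have step : ∀ p : ℕ,
      (((1 + 2 * Real.cosh (2 * (3:ℝ)^p * m)) * (-1 + 2 * Real.cosh (2 * (3:ℝ)^p * r))
          / ((-1 + 2 * Real.cosh (2 * (3:ℝ)^p * m)) * (1 + 2 * Real.cosh (2 * (3:ℝ)^p * r))))
            ^ ((((3:ℝ)^p)⁻¹ : ℝ))
        * (Real.tanh ((3:ℝ)^p * r) / Real.tanh ((3:ℝ)^p * m)) ^ ((2 * ((3:ℝ)^p)⁻¹ : ℝ)))
      = Real.exp (3 * f p - 3 * f (p+1)) := by
    intro p
    have hBpos : 0 < g p / g (p+1) := div_pos (hgp p) (hgp (p+1))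
    rw [hB p, Real.rpow_def_of_pos hBpos, Real.rpow_def_of_pos (hgp p), ← Real.exp_add,
      Real.log_div (hgp p).ne' (hgp (p+1)).ne']
    congr 1
    rw [hf_def]; simp only []
    rw [pow_succ]
    have h3 : ((3:ℝ)^p) ≠ 0 := (h3p p).ne'
    field_simp
    ring
  -- partial products
  have prod_eq : ∀ n : ℕ,
      (∏ p ∈ Finset.range n,
          (((1 + 2 * Real.cosh (2 * (3:ℝ)^p * m)) * (-1 + 2 * Real.cosh (2 * (3:ℝ)^p * r))
              / ((-1 + 2 * Real.cosh (2 * (3:ℝ)^p * m)) * (1 + 2 * Real.cosh (2 * (3:ℝ)^p * r))))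
                ^ ((((3:ℝ)^p)⁻¹ : ℝ))
            * (Real.tanh ((3:ℝ)^p * r) / Real.tanh ((3:ℝ)^p * m)) ^ ((2 * ((3:ℝ)^p)⁻¹ : ℝ))))
      = Real.exp (3 * f 0 - 3 * f n) := by
    intro n
    rw [Finset.prod_congr rfl (fun p _ => step p), ← Real.exp_sum]
    congr 1
    exact Finset.sum_range_sub' (fun i => 3 * f i) n
  -- limits
  have hpow : Tendsto (fun n : ℕ => (3:ℝ)^n) atTop atTop :=
    tendsto_pow_atTop_atTop_of_one_lt (by norm_num)
  have htt : Tendsto t atTop (nhds 1) :=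
    tendsto_tanh_atTop'.comp (hpow.atTop_mul_const hm)
  have hut : Tendsto u atTop (nhds 1) :=
    tendsto_tanh_atTop'.comp (hpow.atTop_mul_const hr)
  have hgt : Tendsto g atTop (nhds 1) := by
    have := hut.div htt one_ne_zero
    rw [div_one] at this; exact this
  have hlog : Tendsto (fun n => Real.log (g n)) atTop (nhds 0) := by
    have := (Real.continuousAt_log one_ne_zero).tendsto.comp hgt
    rw [Real.log_one] at this; exact this
  have hinv : Tendsto (fun n : ℕ => ((3:ℝ)^n)⁻¹) atTop (nhds 0) := by
    have := tendsto_pow_atTop_nhds_zero_of_lt_one (by norm_num : (0:ℝ) ≤ 3⁻¹) (by norm_num)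
    exact this.congr (fun n => by rw [inv_pow])
  have hf0 : Tendsto f atTop (nhds 0) := by
    have := hinv.mul hlog
    rw [mul_zero] at this; exact this
  have hfinal : Tendsto (fun n : ℕ => Real.exp (3 * f 0 - 3 * f n)) atTop
      (nhds (Real.exp (3 * f 0 - 3 * 0))) := by
    exact (Real.continuous_exp.tendsto _).comp
      (tendsto_const_nhds.sub (tendsto_const_nhds.mul hf0))
  rw [mul_zero, sub_zero] at hfinal
  have hval : Real.exp (3 * f 0) = (Real.tanh r / Real.tanh m)^3 := by
    have hg0 : g 0 = Real.tanh r / Real.tanh m := by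
      rw [hg_def, hu_def, ht_def]; simp
    rw [hf_def]; simp only []
    rw [pow_zero, inv_one, one_mul,
      show (3:ℝ) * Real.log (g 0) = Real.log ((g 0)^3) by rw [Real.log_pow]; push_cast; ring,
      Real.exp_log (pow_pos (hgp 0) 3), hg0]
  rw [← hval]
  exact hfinal.congr (fun n => (prod_eq n).symm)


theorem levett_tanh_quotient_infinite_product (m r : ℝ)
    (hm : m ≠ 0) (hr : r ≠ 0) (hsign : 0 < m * r) :
    Filter.Tendsto (fun n : ℕ =>
        ∏ p ∈ Finset.range n,
          (((1 + 2 * Real.cosh (2 * (3:ℝ)^p * m)) * (-1 + 2 * Real.cosh (2 * (3:ℝ)^p * r))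
              / ((-1 + 2 * Real.cosh (2 * (3:ℝ)^p * m)) * (1 + 2 * Real.cosh (2 * (3:ℝ)^p * r))))
                ^ ((((3:ℝ)^p)⁻¹ : ℝ))
            * (Real.tanh ((3:ℝ)^p * r) / Real.tanh ((3:ℝ)^p * m)) ^ ((2 * ((3:ℝ)^p)⁻¹ : ℝ))))
      Filter.atTop (nhds ((Real.tanh r / Real.tanh m)^3)) := by
  rcases lt_or_gt_of_ne hm with hneg | hpos
  · have hrneg : r < 0 := by nlinarith
    have h := levett_main_pos (-m) (-r) (by linarith) (by linarith)
    have hv : (Real.tanh (-r) / Real.tanh (-m))^3 = (Real.tanh r / Real.tanh m)^3 := by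
      rw [Real.tanh_neg, Real.tanh_neg, neg_div_neg_eq]
    rw [hv] at h
    refine h.congr fun n => Finset.prod_congr rfl fun p _ => ?_
    rw [show 2*(3:ℝ)^p*(-m) = -(2*(3:ℝ)^p*m) by ring,
      show 2*(3:ℝ)^p*(-r) = -(2*(3:ℝ)^p*r) by ring,
      show (3:ℝ)^p*(-m) = -((3:ℝ)^p*m) by ring,
      show (3:ℝ)^p*(-r) = -((3:ℝ)^p*r) by ring,
      Real.cosh_neg, Real.cosh_neg, Real.tanh_neg, Real.tanh_neg, neg_div_neg_eq]
  · have hrpos : 0 < r := by nlinarith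
    exact levett_main_pos m r hpos hrpos
end

section
/- For every positive integer n and real m > 0, the finite product ∏_{p=0}^{n-1} ( (e^{−2m·3^{p+1}} + 1)^{2/3} · cosh²(m·3^p) / (2·cosh(2m·3^p) − 1) )^{3^(−2p)} equals 2^{(3/4)(1 + 3^{1−2n})} · cosh³(m) · e^{−3m} · (1 + e^{−2·3^n m})^{−3^{1−2n}}. -/
open Real Finset

lemma one_add_exp_eq (x : ℝ) : 1 + Real.exp (-(2*x)) = 2 * Real.cosh x * Real.exp (-x) := by
  have h1 : Real.exp (-x) * Real.exp x = 1 := by rw [← Real.exp_add]; simp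
  rw [Real.cosh_eq, show (-(2*x)) = -x + -x by ring, Real.exp_add]
  nlinarith [h1]

lemma cosh_eq' (x : ℝ) : Real.cosh x = (1 + Real.exp (-(2*x))) * Real.exp x / 2 := by
  have h1 : Real.exp (-x) * Real.exp x = 1 := by rw [← Real.exp_add]; simp
  rw [one_add_exp_eq x]
  linear_combination (-Real.cosh x) * h1

lemma dpos (x : ℝ) : 0 < 2 * Real.cosh (2*x) - 1 := by
  nlinarith [Real.one_le_cosh (2*x)]

lemma Epos (x : ℝ) : 0 < 1 + Real.exp x := by positivity

lemma base_eq (x : ℝ) :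
    (Real.exp (-(2*(3*x))) + 1) ^ ((2/3:ℝ)) * Real.cosh x ^ 2 / (2 * Real.cosh (2*x) - 1)
    = (2:ℝ) ^ ((-2:ℝ)) * (1 + Real.exp (-(2*x))) ^ ((3:ℝ))
        * (1 + Real.exp (-(2*(3*x)))) ^ ((-(1/3)):ℝ) := by
  have hE' : (0:ℝ) < 1 + Real.exp (-(2*(3*x))) := Epos _
  have hE : (0:ℝ) < 1 + Real.exp (-(2*x)) := Epos _
  have hd := dpos x
  have hsplit : (Real.exp (-(2*(3*x))) + 1) ^ ((2/3:ℝ))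
      = (1 + Real.exp (-(2*(3*x)))) * (1 + Real.exp (-(2*(3*x)))) ^ ((-(1/3)):ℝ) := by
    rw [add_comm, show ((2/3:ℝ)) = 1 + (-(1/3)) by norm_num, Real.rpow_add hE', Real.rpow_one]
  have h3 : Real.cosh x * (2 * Real.cosh (2*x) - 1) = Real.cosh (3*x) := by
    rw [Real.cosh_two_mul, Real.cosh_three_mul]
    linear_combination (-2*Real.cosh x) * (Real.cosh_sq_sub_sinh_sq x)
  have hc3 : Real.cosh (3*x) = (1 + Real.exp (-(2*(3*x)))) * Real.exp (3*x) / 2 := cosh_eq' _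
  have hc1 : Real.cosh x = (1 + Real.exp (-(2*x))) * Real.exp x / 2 := cosh_eq' _
  have h2 : (2:ℝ) ^ ((-2:ℝ)) = 1/4 := by
    rw [show ((-2:ℝ)) = ((-2 : ℤ) : ℝ) by norm_num, Real.rpow_intCast]; norm_num
  have h3r : (1 + Real.exp (-(2*x))) ^ ((3:ℝ)) = (1 + Real.exp (-(2*x))) ^ (3:ℕ) := by
    rw [← Real.rpow_natCast]; norm_num
  have hex : Real.exp (3*x) = Real.exp x ^ (3:ℕ) := by
    rw [← Real.exp_nat_mul]; norm_num
  rw [hsplit, h2, h3r, div_eq_iff hd.ne']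
  have hdd : 2 * Real.cosh (2*x) - 1 = Real.cosh (3*x) / Real.cosh x := by
    field_simp [(Real.cosh_pos x).ne'] at h3 ⊢; linarith [h3]
  rw [hdd, hc3, hc1, hex]
  field_simp
  ring

lemma term_eq (m : ℝ) (n : ℕ) :
    ((Real.exp (-2 * m * (3:ℝ)^(n+1)) + 1) ^ ((2/3 : ℝ))
        * (Real.cosh (m * (3:ℝ)^n))^2
        / (2 * Real.cosh (2 * m * (3:ℝ)^n) - 1)) ^ ((((9:ℝ)^n)⁻¹ : ℝ))
    = (2:ℝ) ^ ((-(2 * ((9:ℝ)^n)⁻¹)) : ℝ)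
        * (1 + Real.exp (-2 * (3:ℝ)^n * m)) ^ ((3 * ((9:ℝ)^n)⁻¹ : ℝ))
        * (1 + Real.exp (-2 * (3:ℝ)^(n+1) * m)) ^ ((-(3 * ((9:ℝ)^(n+1))⁻¹)) : ℝ) := by
  set x : ℝ := m * (3:ℝ)^n with hx
  have e1 : -2 * m * (3:ℝ)^(n+1) = -(2*(3*x)) := by rw [hx, pow_succ]; ring
  have e2 : 2 * m * (3:ℝ)^n = 2 * x := by rw [hx]; ring
  have e3 : -2 * (3:ℝ)^n * m = -(2*x) := by rw [hx]; ring
  have e4 : -2 * (3:ℝ)^(n+1) * m = -(2*(3*x)) := by rw [hx, pow_succ]; ring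
  rw [e1, e2, e3, e4, base_eq x]
  have hE' : (0:ℝ) ≤ 1 + Real.exp (-(2*(3*x))) := (Epos _).le
  have hE : (0:ℝ) ≤ 1 + Real.exp (-(2*x)) := (Epos _).le
  rw [Real.mul_rpow (by positivity) (by positivity), Real.mul_rpow (by positivity) (by positivity),
    ← Real.rpow_mul (by norm_num : (0:ℝ) ≤ 2), ← Real.rpow_mul hE, ← Real.rpow_mul hE']
  have q9 : ((9:ℝ)^(n+1))⁻¹ = ((9:ℝ)^n)⁻¹ / 9 := by rw [pow_succ, mul_inv]; ring
  rw [q9]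
  congr 1
  · congr 2
    ring
  · ring

theorem levett_aux (n : ℕ) (m : ℝ) (hm : 0 < m) :
    ∏ p ∈ Finset.range n,
        ((Real.exp (-2 * m * (3:ℝ)^(p+1)) + 1) ^ ((2/3 : ℝ))
            * (Real.cosh (m * (3:ℝ)^p))^2
            / (2 * Real.cosh (2 * m * (3:ℝ)^p) - 1)) ^ ((((9:ℝ)^p)⁻¹ : ℝ))
      = (2:ℝ) ^ (((3/4) * (1 + 3 * ((9:ℝ)^n)⁻¹) : ℝ))
          * (Real.cosh m)^3 * Real.exp (-3 * m)
          * (1 + Real.exp (-2 * (3:ℝ)^n * m)) ^ ((-(3 * ((9:ℝ)^n)⁻¹) : ℝ)) := by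
  induction n with
  | zero =>
      simp only [Finset.prod_range_zero, pow_zero, inv_one]
      have hA : 1 + Real.exp (-2 * (1:ℝ) * m) = 2 * Real.cosh m * Real.exp (-m) := by
        rw [show (-2 * (1:ℝ) * m) = -(2*m) by ring]; exact one_add_exp_eq m
      have h8 : (2:ℝ) ^ (((3/4) * (1 + 3 * 1) : ℝ)) = 8 := by
        rw [show ((3/4) * (1 + 3 * 1) : ℝ) = ((3:ℤ):ℝ) by norm_num, Real.rpow_intCast]; norm_num
      have hneg : (1 + Real.exp (-2 * (1:ℝ) * m)) ^ ((-(3 * 1) : ℝ))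
          = ((2 * Real.cosh m * Real.exp (-m)) ^ (3:ℕ))⁻¹ := by
        have hpos : (0:ℝ) ≤ 2 * Real.cosh m * Real.exp (-m) := by positivity
        rw [hA, show ((-(3*1):ℝ)) = -((3:ℕ):ℝ) by norm_num, Real.rpow_neg hpos,
          Real.rpow_natCast]
      rw [h8, hneg]
      have hex : Real.exp (-3 * m) = Real.exp (-m) ^ (3:ℕ) := by
        rw [← Real.exp_nat_mul]; norm_num
      rw [hex]
      have hc := Real.cosh_pos m
      have he := Real.exp_pos (-m)
      field_simp
      ring_nf
  | succ n ih =>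
      rw [Finset.prod_range_succ, ih, term_eq m n]
      have hEn : (0:ℝ) < 1 + Real.exp (-2 * (3:ℝ)^n * m) := Epos _
      have h1 : (1 + Real.exp (-2 * (3:ℝ)^n * m)) ^ ((-(3 * ((9:ℝ)^n)⁻¹) : ℝ))
          * (1 + Real.exp (-2 * (3:ℝ)^n * m)) ^ ((3 * ((9:ℝ)^n)⁻¹ : ℝ)) = 1 := by
        rw [← Real.rpow_add hEn]; simp
      have h2 : (2:ℝ) ^ (((3/4) * (1 + 3 * ((9:ℝ)^n)⁻¹) : ℝ))
          * (2:ℝ) ^ ((-(2 * ((9:ℝ)^n)⁻¹)) : ℝ)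
          = (2:ℝ) ^ (((3/4) * (1 + 3 * ((9:ℝ)^(n+1))⁻¹) : ℝ)) := by
        rw [← Real.rpow_add (by norm_num : (0:ℝ) < 2)]
        congr 1
        rw [pow_succ, mul_inv]
        ring
      calc (2:ℝ) ^ (((3/4) * (1 + 3 * ((9:ℝ)^n)⁻¹) : ℝ)) * (Real.cosh m)^3 * Real.exp (-3 * m)
              * (1 + Real.exp (-2 * (3:ℝ)^n * m)) ^ ((-(3 * ((9:ℝ)^n)⁻¹) : ℝ))
              * ((2:ℝ) ^ ((-(2 * ((9:ℝ)^n)⁻¹)) : ℝ)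
                * (1 + Real.exp (-2 * (3:ℝ)^n * m)) ^ ((3 * ((9:ℝ)^n)⁻¹ : ℝ))
                * (1 + Real.exp (-2 * (3:ℝ)^(n+1) * m)) ^ ((-(3 * ((9:ℝ)^(n+1))⁻¹)) : ℝ))
          = ((2:ℝ) ^ (((3/4) * (1 + 3 * ((9:ℝ)^n)⁻¹) : ℝ)) * (2:ℝ) ^ ((-(2 * ((9:ℝ)^n)⁻¹)) : ℝ))
              * ((1 + Real.exp (-2 * (3:ℝ)^n * m)) ^ ((-(3 * ((9:ℝ)^n)⁻¹) : ℝ))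
                * (1 + Real.exp (-2 * (3:ℝ)^n * m)) ^ ((3 * ((9:ℝ)^n)⁻¹ : ℝ)))
              * ((Real.cosh m)^3 * Real.exp (-3 * m)
                * (1 + Real.exp (-2 * (3:ℝ)^(n+1) * m)) ^ ((-(3 * ((9:ℝ)^(n+1))⁻¹)) : ℝ)) := by
            ring
        _ = _ := by rw [h1, h2]; ring

theorem levett_cosh_exp_product (n : ℕ) (hn : 0 < n) (m : ℝ) (hm : 0 < m) :
    ∏ p ∈ Finset.range n,
        ((Real.exp (-2 * m * (3:ℝ)^(p+1)) + 1) ^ ((2/3 : ℝ))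
            * (Real.cosh (m * (3:ℝ)^p))^2
            / (2 * Real.cosh (2 * m * (3:ℝ)^p) - 1)) ^ ((((9:ℝ)^p)⁻¹ : ℝ))
      = (2:ℝ) ^ (((3/4) * (1 + 3 * ((9:ℝ)^n)⁻¹) : ℝ))
          * (Real.cosh m)^3 * Real.exp (-3 * m)
          * (1 + Real.exp (-2 * (3:ℝ)^n * m)) ^ ((-(3 * ((9:ℝ)^n)⁻¹) : ℝ)) := by
  exact levett_aux n m hm
end

section
/- For every positive integer n and real z > 0, the finite product ∏_{p=0}^{n-1} (z^{3^p} + 1)^{3^{−2p−1}} · ( sqrt( (z^{3^{p−1}} − 1)·z^{3^{p−1}} + 1 ) / (z^{3^{p−1}} + 1) )^{3^{−2p}(3^p − 1)} equals (z^{3^{n−1}} + 1)^{(1/2)·3^{1−2n}·(3^n − 1)}. -/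
open Real Finset

lemma levett_step (w : ℝ) (hw : 0 < w) (a b : ℝ) :
    (w + 1) ^ (3 * b / 2) *
      ((w ^ (3:ℝ) + 1) ^ a * (Real.sqrt ((w - 1) * w + 1) / (w + 1)) ^ b)
      = (w ^ (3:ℝ) + 1) ^ (a + b / 2) := by
  have hu : (0:ℝ) < w + 1 := by linarith
  have h3 : w ^ (3:ℝ) = w ^ (3:ℕ) := by
    rw [← Real.rpow_natCast w 3]; norm_num
  rw [h3]
  have hv : (0:ℝ) < w ^ (3:ℕ) + 1 := by positivity
  have key : Real.sqrt ((w - 1) * w + 1) / (w + 1)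
      = (w ^ (3:ℕ) + 1) ^ ((1:ℝ)/2) * (w + 1) ^ (-(3:ℝ)/2) := by
    have h1 : (w - 1) * w + 1 = (w ^ (3:ℕ) + 1) / (w + 1) := by
      field_simp; ring
    rw [h1, Real.sqrt_eq_rpow, Real.div_rpow hv.le hu.le, div_div]
    have h2 : (w + 1) ^ ((1:ℝ)/2) * (w + 1) = (w + 1) ^ ((3:ℝ)/2) := by
      nth_rewrite 2 [← Real.rpow_one (w + 1)]
      rw [← Real.rpow_add hu]; norm_num
    rw [h2, div_eq_mul_inv, ← Real.rpow_neg hu.le]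
    norm_num
  rw [key, Real.mul_rpow (Real.rpow_nonneg hv.le _) (Real.rpow_nonneg hu.le _),
    ← Real.rpow_mul hv.le, ← Real.rpow_mul hu.le]
  have : (w + 1) ^ (3 * b / 2) *
      ((w ^ (3:ℕ) + 1) ^ a * ((w ^ (3:ℕ) + 1) ^ ((1:ℝ)/2 * b) * (w + 1) ^ (-(3:ℝ)/2 * b)))
      = ((w + 1) ^ (3 * b / 2) * (w + 1) ^ (-(3:ℝ)/2 * b)) *
        ((w ^ (3:ℕ) + 1) ^ a * (w ^ (3:ℕ) + 1) ^ ((1:ℝ)/2 * b)) := by ring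
  rw [this, ← Real.rpow_add hu, ← Real.rpow_add hv,
    show 3 * b / 2 + -3 / 2 * b = 0 by ring, Real.rpow_zero, one_mul,
    show a + 1 / 2 * b = a + b / 2 by ring]

theorem levett_polynomial_product (n : ℕ) (hn : 0 < n) (z : ℝ) (hz : 0 < z) :
    ∏ p ∈ Finset.range n,
        (z ^ (((3:ℝ)^p : ℝ)) + 1) ^ ((((9:ℝ)^p)⁻¹ / 3 : ℝ))
          * (Real.sqrt ((z ^ (((3:ℝ)^p / 3 : ℝ)) - 1) * z ^ (((3:ℝ)^p / 3 : ℝ)) + 1)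
              / (z ^ (((3:ℝ)^p / 3 : ℝ)) + 1)) ^ ((((9:ℝ)^p)⁻¹ * ((3:ℝ)^p - 1) : ℝ))
      = (z ^ (((3:ℝ)^n / 3 : ℝ)) + 1)
          ^ (((1/2) * 3 * ((9:ℝ)^n)⁻¹ * ((3:ℝ)^n - 1) : ℝ)) := by
  clear hn
  induction n with
  | zero => norm_num
  | succ n ih =>
    rw [Finset.prod_range_succ, ih]
    have hw : 0 < z ^ (((3:ℝ)^n / 3 : ℝ)) := Real.rpow_pos_of_pos hz _
    set w := z ^ (((3:ℝ)^n / 3 : ℝ)) with hwdef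
    have hcube : z ^ (((3:ℝ)^n : ℝ)) = w ^ (3:ℝ) := by
      rw [hwdef, ← Real.rpow_mul hz.le]; congr 1; ring
    have hnext : z ^ (((3:ℝ)^(n+1) / 3 : ℝ)) = w ^ (3:ℝ) := by
      rw [hwdef, ← Real.rpow_mul hz.le]; congr 1; ring
    rw [hcube, hnext,
      show ((1/2) * 3 * ((9:ℝ)^n)⁻¹ * ((3:ℝ)^n - 1) : ℝ)
        = 3 * (((9:ℝ)^n)⁻¹ * ((3:ℝ)^n - 1)) / 2 by ring,
      levett_step w hw]
    congr 1
    have h9 : ((9:ℝ)^n) ≠ 0 := by positivity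
    rw [pow_succ, pow_succ]
    field_simp
    ring
end

section
/- For every positive integer n and nonzero real numbers m, r, the finite product ∏_{p=0}^{n-1} ( (−1 + 2cosh(2·3^p m)) · (cosh(3^p r)/cosh(3^p m))² / (−1 + 2cosh(2·3^p r)) )^{3^{1−2p}(3^p − 1)} · (cosh(3^{p+1} m)/cosh(3^{p+1} r))^{2·3^{−2p}} equals (cosh(3^n m)/cosh(3^n r))^{9^{1−n}(3^n − 1)}. -/
open Real Finset

lemma levett_cosh_three (x : ℝ) :
    -1 + 2 * Real.cosh (2*x) = Real.cosh (3*x) / Real.cosh x := by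
  rw [Real.cosh_two_mul, Real.cosh_three_mul]
  field_simp [(Real.cosh_pos x).ne']
  rw [Real.sinh_sq]
  ring

lemma levett_key_s13 (a b e f : ℝ) :
    ((-1 + 2 * Real.cosh (2*a)) * (Real.cosh b / Real.cosh a)^2
        / (-1 + 2 * Real.cosh (2*b)))^e
      * (Real.cosh (3*a) / Real.cosh (3*b))^f
    = (Real.cosh (3*a) / Real.cosh (3*b))^(e+f)
        * (Real.cosh a / Real.cosh b)^(-(3*e)) := by
  have hQ : 0 < Real.cosh (3*a) / Real.cosh (3*b) :=
    div_pos (Real.cosh_pos _) (Real.cosh_pos _)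
  have hX : 0 < Real.cosh a / Real.cosh b :=
    div_pos (Real.cosh_pos _) (Real.cosh_pos _)
  have hbase : (-1 + 2 * Real.cosh (2*a)) * (Real.cosh b / Real.cosh a)^2
        / (-1 + 2 * Real.cosh (2*b))
      = (Real.cosh (3*a) / Real.cosh (3*b))
          * (Real.cosh a / Real.cosh b) ^ (-(3:ℝ)) := by
    have h3 : (Real.cosh a / Real.cosh b) ^ (-(3:ℝ))
        = ((Real.cosh a / Real.cosh b) ^ (3:ℕ))⁻¹ := by
      rw [Real.rpow_neg hX.le]
      congr 1
      exact_mod_cast Real.rpow_natCast _ 3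
    rw [levett_cosh_three a, levett_cosh_three b, h3]
    have ha := (Real.cosh_pos a).ne'
    have hb := (Real.cosh_pos b).ne'
    field_simp
  rw [hbase, Real.mul_rpow hQ.le (Real.rpow_nonneg hX.le _),
    ← Real.rpow_mul hX.le, Real.rpow_add hQ]
  ring_nf

theorem levett_cosh_quotient_product (n : ℕ) (hn : 0 < n) (m r : ℝ)
    (hm : m ≠ 0) (hr : r ≠ 0) :
    ∏ p ∈ Finset.range n,
        ((-1 + 2 * Real.cosh (2 * (3:ℝ)^p * m))
            * (Real.cosh ((3:ℝ)^p * r) / Real.cosh ((3:ℝ)^p * m))^2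
            / (-1 + 2 * Real.cosh (2 * (3:ℝ)^p * r)))
              ^ ((3 * ((9:ℝ)^p)⁻¹ * ((3:ℝ)^p - 1) : ℝ))
          * (Real.cosh ((3:ℝ)^(p+1) * m) / Real.cosh ((3:ℝ)^(p+1) * r))
              ^ ((2 * ((9:ℝ)^p)⁻¹ : ℝ))
      = (Real.cosh ((3:ℝ)^n * m) / Real.cosh ((3:ℝ)^n * r))
          ^ ((9 * ((9:ℝ)^n)⁻¹ * ((3:ℝ)^n - 1) : ℝ)) := by
  clear hn hm hr
  induction n with
  | zero => simp
  | succ k ih =>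
    rw [Finset.prod_range_succ, ih]
    have e1 : 2 * (3:ℝ)^k * m = 2 * ((3:ℝ)^k * m) := by ring
    have e2 : 2 * (3:ℝ)^k * r = 2 * ((3:ℝ)^k * r) := by ring
    have e3 : (3:ℝ)^(k+1) * m = 3 * ((3:ℝ)^k * m) := by ring
    have e4 : (3:ℝ)^(k+1) * r = 3 * ((3:ℝ)^k * r) := by ring
    rw [e1, e2, e3, e4, levett_key_s13]
    have h9 : ((9:ℝ)^k) ≠ 0 := by positivity
    have hee : (3 * ((9:ℝ)^k)⁻¹ * ((3:ℝ)^k - 1) + 2 * ((9:ℝ)^k)⁻¹)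
        = (9 * ((9:ℝ)^(k+1))⁻¹ * ((3:ℝ)^(k+1) - 1)) := by
      field_simp
      ring
    have hgg : (-(3 * (3 * ((9:ℝ)^k)⁻¹ * ((3:ℝ)^k - 1))))
        = -(9 * ((9:ℝ)^k)⁻¹ * ((3:ℝ)^k - 1)) := by ring
    rw [hee, hgg]
    have hX : 0 < Real.cosh ((3:ℝ)^k * m) / Real.cosh ((3:ℝ)^k * r) :=
      div_pos (Real.cosh_pos _) (Real.cosh_pos _)
    rw [Real.rpow_neg hX.le]
    rw [← mul_assoc, mul_comm ((Real.cosh ((3:ℝ)^k * m) / Real.cosh ((3:ℝ)^k * r))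
        ^ (9 * ((9:ℝ)^k)⁻¹ * ((3:ℝ)^k - 1)))]
    rw [mul_assoc, mul_inv_cancel₀ (Real.rpow_pos_of_pos hX _).ne', mul_one]
end

section
/- For every positive integer n and real m such that cos(3^p m) ≠ 0 and cos(3^{p+1} m) ≠ 0 for 0 ≤ p ≤ n−1, and cos(3^n m) ≠ 0, the identity ∑_{p=0}^{n-1} 3^{−p} · sin(3^p m) · (2cos(2·3^p m) + 3^{p+1} − 2) · sec(3^{p+1} m) = (1/2)·3^{1−n}·(3^n − 1)·tan(3^n m) holds. -/
open Real Finset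

lemma key_trig (x : ℝ) (hx : Real.cos x ≠ 0) (h3 : Real.cos (3*x) ≠ 0) (c : ℝ) :
    Real.sin x * (2 * Real.cos (2*x) + c - 2) * (Real.cos (3*x))⁻¹
      = (1/2)*(c-1)*Real.tan (3*x) - (1/2)*(c-3)*Real.tan x := by
  rw [Real.tan_eq_sin_div_cos, Real.tan_eq_sin_div_cos, Real.sin_three_mul,
    Real.cos_three_mul, Real.cos_two_mul]
  rw [Real.cos_three_mul] at h3
  have hpy := Real.sin_sq_add_cos_sq x
  have h3' : Real.cos x ^ 2 * 4 - 3 ≠ 0 := fun h => h3 (by linear_combination Real.cos x * h)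
  field_simp
  linear_combination (4*(c-1)*Real.sin x) * hpy

theorem levett_third_series_degenerate (n : ℕ) (hn : 0 < n) (m : ℝ)
    (hcos : ∀ p ≤ n, Real.cos ((3:ℝ)^p * m) ≠ 0) :
    ∑ p ∈ Finset.range n,
        ((3:ℝ)^p)⁻¹ * Real.sin ((3:ℝ)^p * m)
          * (2 * Real.cos (2 * (3:ℝ)^p * m) + (3:ℝ)^(p+1) - 2)
          * (Real.cos ((3:ℝ)^(p+1) * m))⁻¹
      = (1/2) * (3 * ((3:ℝ)^n)⁻¹) * ((3:ℝ)^n - 1) * Real.tan ((3:ℝ)^n * m) := by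
  set g : ℕ → ℝ := fun k => (1/2) * (3 * ((3:ℝ)^k)⁻¹) * ((3:ℝ)^k - 1) * Real.tan ((3:ℝ)^k * m)
    with hg
  have hsum : ∑ p ∈ Finset.range n,
      ((3:ℝ)^p)⁻¹ * Real.sin ((3:ℝ)^p * m)
        * (2 * Real.cos (2 * (3:ℝ)^p * m) + (3:ℝ)^(p+1) - 2)
        * (Real.cos ((3:ℝ)^(p+1) * m))⁻¹
      = ∑ p ∈ Finset.range n, (g (p+1) - g p) := by
    apply Finset.sum_congr rfl
    intro p hp
    have hpn : p ≤ n := le_of_lt (Finset.mem_range.mp hp)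
    have hp1n : p + 1 ≤ n := Finset.mem_range.mp hp
    have hx := hcos p hpn
    have h3x : Real.cos (3 * ((3:ℝ)^p * m)) ≠ 0 := by
      have := hcos (p+1) hp1n
      rw [pow_succ] at this
      convert this using 2
      ring
    have hk := key_trig ((3:ℝ)^p * m) hx h3x ((3:ℝ)^(p+1))
    have e1 : 2 * ((3:ℝ)^p * m) = 2 * (3:ℝ)^p * m := by ring
    have e2 : 3 * ((3:ℝ)^p * m) = (3:ℝ)^(p+1) * m := by rw [pow_succ]; ring
    rw [e1, e2] at hk
    have h3p : ((3:ℝ)^p) ≠ 0 := by positivity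
    calc ((3:ℝ)^p)⁻¹ * Real.sin ((3:ℝ)^p * m)
          * (2 * Real.cos (2 * (3:ℝ)^p * m) + (3:ℝ)^(p+1) - 2)
          * (Real.cos ((3:ℝ)^(p+1) * m))⁻¹
        = ((3:ℝ)^p)⁻¹ * (Real.sin ((3:ℝ)^p * m)
          * (2 * Real.cos (2 * (3:ℝ)^p * m) + (3:ℝ)^(p+1) - 2)
          * (Real.cos ((3:ℝ)^(p+1) * m))⁻¹) := by ring
      _ = ((3:ℝ)^p)⁻¹ * ((1/2)*((3:ℝ)^(p+1)-1)*Real.tan ((3:ℝ)^(p+1) * m)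
            - (1/2)*((3:ℝ)^(p+1)-3)*Real.tan ((3:ℝ)^p * m)) := by rw [hk]
      _ = g (p+1) - g p := by
          simp only [hg]
          rw [pow_succ]
          field_simp
  rw [hsum, Finset.sum_range_sub]
  simp [hg]
end
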